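/- Suppose v̂ ∈ ℝᵐ is a centered point for parameter μ > 0 and v ≠ v̂. Let d = d(v,μ) ≠ 0 be the Newton direction at v, define f(t) := h(v̂, v + t·d), and fix β ∈ (0,1). If max(1, ‖d‖∞²/(2β)) = 1, then f(1) ≤ (1/2)‖d‖∞²·f(0) ≤ β·f(0). -/

import Mathlib

open Matrix

/-- Elementwise exponentiation `e^v` of a vector. -/
noncomputable def expV {m : ℕ} (v : Fin m → ℝ) : Fin m → ℝ := fun i => Real.exp (v i)

/-- The log-domain Newton system: `(d, x)` satisfies
`√μ·Aᵀ(eᵛ + eᵛ∘d) = Wx + c` and `√μ·(e^{−v} − e^{−v}∘d) = Ax + b`. -/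
noncomputable def IsNewton {m n : ℕ} (A : Matrix (Fin m) (Fin n) ℝ) (b : Fin m → ℝ)
    (c : Fin n → ℝ) (W : Matrix (Fin n) (Fin n) ℝ) (μ : ℝ) (v d : Fin m → ℝ)
    (x : Fin n → ℝ) : Prop :=
  Real.sqrt μ • (Aᵀ).mulVec (expV v + expV v * d) = W.mulVec x + c ∧
  Real.sqrt μ • (expV (-v) - expV (-v) * d) = A.mulVec x + b

/-- `v` is a centered point for parameter `μ`, witnessed by `x`:
`√μ·Aᵀeᵛ = Wx + c` and `√μ·e^{−v} = Ax + b`. -/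
noncomputable def IsCentered {m n : ℕ} (A : Matrix (Fin m) (Fin n) ℝ) (b : Fin m → ℝ)
    (c : Fin n → ℝ) (W : Matrix (Fin n) (Fin n) ℝ) (μ : ℝ) (v : Fin m → ℝ)
    (x : Fin n → ℝ) : Prop :=
  Real.sqrt μ • (Aᵀ).mulVec (expV v) = W.mulVec x + c ∧
  Real.sqrt μ • expV (-v) = A.mulVec x + b

/-- The divergence `h(u,v) := ⟨eᵘ, e^{−v}⟩ + ⟨e^{−u}, eᵛ⟩ − 2m`. -/
noncomputable def diverg {m : ℕ} (u v : Fin m → ℝ) : ℝ :=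
  (∑ i, Real.exp (u i) * Real.exp (-v i)) + (∑ i, Real.exp (-u i) * Real.exp (v i))
    - 2 * m

/-- The Euclidean norm of a vector in `ℝᵐ`. -/
noncomputable def enorm {m : ℕ} (d : Fin m → ℝ) : ℝ := Real.sqrt (∑ i, d i ^ 2)

/-!
Write `w = v - v̂`, so that `h(v̂, v + t d) = 2 ∑ᵢ (cosh (wᵢ + t dᵢ) - 1)`. Subtracting the
centering equations from the Newton equations gives residuals `p, q` with `√μ Aᵀp = W y` and
`√μ q = A y` for `y = x - x̂`, hence `μ ⟨p, q⟩ = yᵀ W y ≥ 0`; written out, this is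
`∑ᵢ (cosh wᵢ - 1 + dᵢ sinh wᵢ + dᵢ² / 2) ≤ 0`.
The remainder is controlled by `cosh (a + t) ≤ (1 + t²/3) cosh a + t sinh a + (t²/6) cosh (a + t)`,
which follows from `eˣ (1 - x²/6) ≤ 1 + x + x²/3`. With `k = ‖d‖∞²` this yields
`(1 - k/6) f(1) ≤ (k/3) f(0)`, and `2k / (6 - k) ≤ k / 2` as soon as `k ≤ 2`.
-/

open Real

lemma Real.one_sub_sq_div_six_le_mul_exp_neg (x : ℝ) :
    1 - x ^ 2 / 6 ≤ (1 + x + x ^ 2 / 3) * exp (-x) := by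
  set h : ℝ → ℝ := fun x ↦ (1 + x + x ^ 2 / 3) * exp (-x) - (1 - x ^ 2 / 6)
  set h' : ℝ → ℝ := fun x ↦ x / 3 * (1 - (1 + x) * exp (-x))
  have hderiv : ∀ x, HasDerivAt h (h' x) x := fun x ↦
    (((((hasDerivAt_id x).const_add 1).add ((hasDerivAt_pow 2 x).div_const 3)).mul
      ((hasDerivAt_neg x).exp)).sub (((hasDerivAt_pow 2 x).div_const 6).const_sub 1)).congr_deriv
      (by simp only [h', Pi.add_apply, id]; norm_num; ring)
  -- `h'` has the sign of `x` because `1 + x ≤ eˣ`, so `h` is minimal at `0`.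
  have hfactor : ∀ x, 0 ≤ 1 - (1 + x) * exp (-x) := fun x ↦ by
    have := mul_le_mul_of_nonneg_right (add_one_le_exp x) (exp_pos (-x)).le
    rw [← exp_add, add_neg_cancel, exp_zero, add_comm] at this
    linarith
  have hcont : Continuous h := continuous_iff_continuousAt.2 fun x ↦ (hderiv x).continuousAt
  suffices 0 ≤ h x by simpa [h] using this
  have h0 : h 0 = 0 := by simp [h]
  rcases le_total 0 x with hx | hx
  · have := monotoneOn_of_hasDerivWithinAt_nonneg (convex_Ici 0) hcont.continuousOn
      (fun y _ ↦ (hderiv y).hasDerivWithinAt) (fun y hy ↦ ?_) Set.self_mem_Ici hx hx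
    · linarith
    · rw [interior_Ici] at hy
      exact mul_nonneg (div_nonneg hy.le zero_le_three) (hfactor y)
  · have := antitoneOn_of_hasDerivWithinAt_nonpos (convex_Iic 0) hcont.continuousOn
      (fun y _ ↦ (hderiv y).hasDerivWithinAt) (fun y hy ↦ ?_) hx Set.self_mem_Iic hx
    · linarith
    · rw [interior_Iic] at hy
      exact mul_nonpos_of_nonpos_of_nonneg (div_nonpos_of_nonpos_of_nonneg hy.le zero_le_three)
        (hfactor y)

lemma Real.exp_mul_one_sub_sq_div_six_le (x : ℝ) :
    exp x * (1 - x ^ 2 / 6) ≤ 1 + x + x ^ 2 / 3 :=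
  calc exp x * (1 - x ^ 2 / 6) ≤ exp x * ((1 + x + x ^ 2 / 3) * exp (-x)) :=
        mul_le_mul_of_nonneg_left (one_sub_sq_div_six_le_mul_exp_neg x) (exp_pos x).le
    _ = 1 + x + x ^ 2 / 3 := by rw [mul_left_comm, ← exp_add, add_neg_cancel, exp_zero, mul_one]

lemma Real.cosh_add_le (a t : ℝ) :
    cosh (a + t) ≤ (1 + t ^ 2 / 3) * cosh a + t * sinh a + t ^ 2 / 6 * cosh (a + t) := by
  have hpos := mul_le_mul_of_nonneg_left (exp_mul_one_sub_sq_div_six_le t) (exp_pos a).le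
  have hneg := mul_le_mul_of_nonneg_left (exp_mul_one_sub_sq_div_six_le (-t)) (exp_pos (-a)).le
  simp only [cosh_eq, sinh_eq, exp_add, neg_add, exp_add]
  linear_combination (hpos + hneg) / 2
lemma Real.cosh_add_sub_one_le {a t k : ℝ} (ht : t ^ 2 ≤ k) :
    cosh (a + t) - 1 ≤ (cosh a - 1 + t * sinh a + t ^ 2 / 2) + k / 3 * (cosh a - 1)
      + k / 6 * (cosh (a + t) - 1) := by
  have h0 := mul_le_mul_of_nonneg_right ht (sub_nonneg.2 (one_le_cosh a))
  have h1 := mul_le_mul_of_nonneg_right ht (sub_nonneg.2 (one_le_cosh (a + t)))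
  linarith [cosh_add_le a t]

lemma Real.sum_cosh_add_sub_one_le {ι : Type*} [Fintype ι] (w d : ι → ℝ) {k : ℝ}
    (hk : ∀ i, d i ^ 2 ≤ k) :
    ∑ i, (cosh (w i + d i) - 1) ≤
      ∑ i, (cosh (w i) - 1 + d i * sinh (w i) + d i ^ 2 / 2) + k / 3 * ∑ i, (cosh (w i) - 1)
        + k / 6 * ∑ i, (cosh (w i + d i) - 1) := by
  simp only [Finset.mul_sum, ← Finset.sum_add_distrib]
  exact Finset.sum_le_sum fun i _ ↦ cosh_add_sub_one_le (hk i)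

lemma diverg_eq_two_mul_sum_cosh {m : ℕ} (u v : Fin m → ℝ) :
    diverg u v = 2 * ∑ i, (cosh (v i - u i) - 1) := by
  have hterm : ∀ i, exp (u i) * exp (-v i) + exp (-u i) * exp (v i) = 2 * cosh (v i - u i) :=
    fun i ↦ by rw [cosh_eq, ← exp_add, ← exp_add]; ring_nf
  simp only [diverg, ← Finset.sum_add_distrib, hterm, Finset.mul_sum, mul_sub,
    Finset.sum_sub_distrib, Finset.sum_const, Finset.card_univ, Fintype.card_fin, nsmul_eq_mul]
  ring

lemma Matrix.mul_mul_dotProduct_eq_dotProduct_mulVec {R m n : Type*} [CommRing R] [Fintype m]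
    [Fintype n] {A : Matrix m n R} {W : Matrix n n R} {s : R} {p q : m → R} {y : n → R}
    (hp : s • Aᵀ *ᵥ p = W *ᵥ y) (hq : s • q = A *ᵥ y) :
    s * s * (p ⬝ᵥ q) = y ⬝ᵥ W *ᵥ y := by
  calc s * s * (p ⬝ᵥ q) = (s • Aᵀ *ᵥ p) ⬝ᵥ y := by
        rw [mul_assoc, ← smul_eq_mul s (p ⬝ᵥ q), ← dotProduct_smul, hq, dotProduct_mulVec,
          ← mulVec_transpose, smul_dotProduct, smul_eq_mul]
    _ = y ⬝ᵥ W *ᵥ y := by rw [hp, dotProduct_comm]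

lemma newton_residual_mul_eq (u v d : ℝ) :
    (exp v + exp v * d - exp u) * (exp (-v) - exp (-v) * d - exp (-u)) =
      -2 * (cosh (v - u) - 1 + d * sinh (v - u) + d ^ 2 / 2) := by
  have e1 : exp v * exp (-v) = 1 := by rw [← exp_add, add_neg_cancel, exp_zero]
  have e2 : exp u * exp (-u) = 1 := by rw [← exp_add, add_neg_cancel, exp_zero]
  have e3 : exp (v - u) = exp v * exp (-u) := by rw [sub_eq_add_neg, exp_add]
  have e4 : exp (-(v - u)) = exp u * exp (-v) := by rw [neg_sub, sub_eq_add_neg, exp_add]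
  rw [cosh_eq, sinh_eq, e3, e4]
  linear_combination (1 - d ^ 2) * e1 + e2

lemma IsNewton.sum_cosh_sub_one_add_le_zero {m n : ℕ} {A : Matrix (Fin m) (Fin n) ℝ}
    {b : Fin m → ℝ} {c : Fin n → ℝ} {W : Matrix (Fin n) (Fin n) ℝ} {μ : ℝ}
    {vhat v d : Fin m → ℝ} {xhat x : Fin n → ℝ} (hd : IsNewton A b c W μ v d x)
    (hcent : IsCentered A b c W μ vhat xhat) (hW : W.PosSemidef) (hμ : 0 < μ) :
    ∑ i, (cosh (v i - vhat i) - 1 + d i * sinh (v i - vhat i) + d i ^ 2 / 2) ≤ 0 := by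
  set p := expV v + expV v * d - expV vhat
  set q := expV (-v) - expV (-v) * d - expV (-vhat)
  have hp : √μ • Aᵀ *ᵥ p = W *ᵥ (x - xhat) := by
    rw [mulVec_sub, smul_sub, hd.1, hcent.1, mulVec_sub]; abel
  have hq : √μ • q = A *ᵥ (x - xhat) := by
    rw [smul_sub, hd.2, hcent.2, mulVec_sub]; abel
  have hpq : 0 ≤ μ * (p ⬝ᵥ q) := by
    rw [← mul_self_sqrt hμ.le, mul_mul_dotProduct_eq_dotProduct_mulVec hp hq]
    simpa using hW.dotProduct_mulVec_nonneg (x - xhat)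
  have hpq_sum : p ⬝ᵥ q = -2 * ∑ i, (cosh (v i - vhat i) - 1 + d i * sinh (v i - vhat i)
      + d i ^ 2 / 2) := by
    simp only [dotProduct, Finset.mul_sum, ← newton_residual_mul_eq]
    rfl
  linarith [(mul_nonneg_iff_of_pos_left hμ).1 hpq]

theorem stmt_7_general {m n : ℕ} (A : Matrix (Fin m) (Fin n) ℝ) (b : Fin m → ℝ) (c : Fin n → ℝ)
    (W : Matrix (Fin n) (Fin n) ℝ) (hW : W.PosSemidef)
    (μ : ℝ) (hμ : 0 < μ) (vhat : Fin m → ℝ) (xhat : Fin n → ℝ)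
    (hcent : IsCentered A b c W μ vhat xhat)
    (v d : Fin m → ℝ) (x : Fin n → ℝ) (hd : IsNewton A b c W μ v d x)
    (β : ℝ) (hβ : β ∈ Set.Ioo (0 : ℝ) 1)
    (hα : max 1 (‖d‖ ^ 2 / (2 * β)) = 1) :
    diverg vhat (v + d) ≤ (1 / 2) * ‖d‖ ^ 2 * diverg vhat v ∧
    (1 / 2) * ‖d‖ ^ 2 * diverg vhat v ≤ β * diverg vhat v := by
  obtain ⟨hβ0, hβ1⟩ := hβ
  have hk : ‖d‖ ^ 2 ≤ 2 * β := (div_le_one (by positivity)).1 (max_eq_left_iff.1 hα)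
  have hdk : ∀ i, d i ^ 2 ≤ ‖d‖ ^ 2 := fun i ↦ by
    simpa [sq_abs] using pow_le_pow_left₀ (norm_nonneg _) (norm_le_pi_norm d i) 2
  have horth := hd.sum_cosh_sub_one_add_le_zero hcent hW hμ
  have hstep := sum_cosh_add_sub_one_le (fun i ↦ v i - vhat i) d hdk
  have hF0 : 0 ≤ ∑ i, (cosh (v i - vhat i) - 1) :=
    Finset.sum_nonneg fun i _ ↦ sub_nonneg.2 (one_le_cosh _)
  have hvd : diverg vhat (v + d) = 2 * ∑ i, (cosh (v i - vhat i + d i) - 1) := by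
    simp only [diverg_eq_two_mul_sum_cosh, Pi.add_apply, add_sub_right_comm]
  rw [hvd, diverg_eq_two_mul_sum_cosh]
  constructor
  · nlinarith [mul_nonneg (mul_nonneg (sq_nonneg ‖d‖) hF0) (by linarith : (0 : ℝ) ≤ 2 - ‖d‖ ^ 2)]
  · nlinarith [mul_le_mul_of_nonneg_right hk hF0]

/-- if `v̂` is centered for `μ > 0`, `v ≠ v̂`, `d = d(v,μ) ≠ 0`,
`β ∈ (0,1)` and `max(1, ‖d‖∞²/(2β)) = 1`, then
`f(1) ≤ (1/2)‖d‖∞²·f(0) ≤ β·f(0)` where `f(t) := h(v̂, v + t·d)`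
(here `‖d‖` on `Fin m → ℝ` is the sup norm). -/
theorem stmt_7 {m n : ℕ} (A : Matrix (Fin m) (Fin n) ℝ) (b : Fin m → ℝ) (c : Fin n → ℝ)
    (W : Matrix (Fin n) (Fin n) ℝ) (hW : W.PosSemidef) (hAW : (Aᵀ * A + W).PosDef)
    (μ : ℝ) (hμ : 0 < μ) (vhat : Fin m → ℝ) (xhat : Fin n → ℝ)
    (hcent : IsCentered A b c W μ vhat xhat)
    (v d : Fin m → ℝ) (x : Fin n → ℝ) (hd : IsNewton A b c W μ v d x)
    (hne : v ≠ vhat) (hdne : d ≠ 0)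
    (β : ℝ) (hβ : β ∈ Set.Ioo (0 : ℝ) 1)
    (hα : max 1 (‖d‖ ^ 2 / (2 * β)) = 1) :
    diverg vhat (v + d) ≤ (1 / 2) * ‖d‖ ^ 2 * diverg vhat v ∧
    (1 / 2) * ‖d‖ ^ 2 * diverg vhat v ≤ β * diverg vhat v :=
  stmt_7_general A b c W hW μ hμ vhat xhat hcent v d x hd β hβ hα
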